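/- arXiv:2510.12382 — 2 statements merged into one kernel-verified Lean document; each statement's English description precedes it below -/
import Mathlib

section
/- Define the scenario-based cost for a finite coalition S ⊆ M as l(S) = min over q ∈ ℝ of (1/N)·Σ_{ξ=1}^N [ψ⁺·max(y_S^{(ξ)} − q, 0) + ψ⁻·max(q − y_S^{(ξ)}, 0)], where y_S^{(ξ)} = Σ_{i∈S} y_i^{(ξ)}. Then l is subadditive: for disjoint coalitions S and T, l(S ∪ T) ≤ l(S) + l(T). -/
/-- Subadditivity of the scenario-based newsvendor coalition cost. -/
theorem coalition_cost_subadditive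
    (m N : ℕ) (hN : 1 ≤ N) (y : Fin m → Fin N → ℝ)
    (ψp ψm : ℝ) (hψp : 0 < ψp) (hψm : 0 < ψm)
    (l : Finset (Fin m) → ℝ)
    (hl : ∀ S : Finset (Fin m),
      l S = ⨅ q : ℝ, (1 / N : ℝ) * ∑ ξ : Fin N,
        (ψp * max ((∑ i ∈ S, y i ξ) - q) 0 + ψm * max (q - ∑ i ∈ S, y i ξ) 0))
    (S T : Finset (Fin m)) (hST : Disjoint S T) :
    l (S ∪ T) ≤ l S + l T := by
  set f : Finset (Fin m) → ℝ → ℝ := fun S q => (1 / N : ℝ) * ∑ ξ : Fin N,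
        (ψp * max ((∑ i ∈ S, y i ξ) - q) 0 + ψm * max (q - ∑ i ∈ S, y i ξ) 0) with hf
  have hnonneg : ∀ U q, 0 ≤ f U q := by
    intro U q
    apply mul_nonneg (by positivity)
    apply Finset.sum_nonneg
    intro ξ _
    have := le_max_right ((∑ i ∈ U, y i ξ) - q) 0
    positivity
  have hbdd : ∀ U : Finset (Fin m), BddBelow (Set.range (f U)) :=
    fun U => ⟨0, by rintro x ⟨q, rfl⟩; exact hnonneg U q⟩
  have key : ∀ qS qT : ℝ, f (S ∪ T) (qS + qT) ≤ f S qS + f T qT := by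
    intro qS qT
    simp only [hf]
    rw [← mul_add, ← Finset.sum_add_distrib]
    apply mul_le_mul_of_nonneg_left _ (by positivity)
    apply Finset.sum_le_sum
    intro ξ _
    rw [Finset.sum_union hST]
    set a := ∑ i ∈ S, y i ξ
    set b := ∑ i ∈ T, y i ξ
    have h1 : max (a + b - (qS + qT)) 0 ≤ max (a - qS) 0 + max (b - qT) 0 := by
      rcases le_total (a + b - (qS + qT)) 0 with h | h
      · rw [max_eq_right h]
        have := le_max_right (a - qS) 0; have := le_max_right (b - qT) 0; linarith
      · rw [max_eq_left h]
        have := le_max_left (a - qS) 0; have := le_max_left (b - qT) 0; linarith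
    have h2 : max (qS + qT - (a + b)) 0 ≤ max (qS - a) 0 + max (qT - b) 0 := by
      rcases le_total (qS + qT - (a + b)) 0 with h | h
      · rw [max_eq_right h]
        have := le_max_right (qS - a) 0; have := le_max_right (qT - b) 0; linarith
      · rw [max_eq_left h]
        have := le_max_left (qS - a) 0; have := le_max_left (qT - b) 0; linarith
    nlinarith [hψp.le, hψm.le]
  have main : ∀ qS qT : ℝ, l (S ∪ T) ≤ f S qS + f T qT := by
    intro qS qT
    calc l (S ∪ T) = ⨅ q, f (S ∪ T) q := hl _
      _ ≤ f (S ∪ T) (qS + qT) := ciInf_le (hbdd _) _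
      _ ≤ f S qS + f T qT := key qS qT
  have h1 : ∀ qS : ℝ, l (S ∪ T) - l T ≤ f S qS := by
    intro qS
    have : l (S ∪ T) - f S qS ≤ l T := by
      rw [hl T]
      apply le_ciInf
      intro qT
      show l (S ∪ T) - f S qS ≤ f T qT
      linarith [main qS qT]
    linarith
  have : l (S ∪ T) - l T ≤ l S := by
    rw [hl S]; exact le_ciInf fun qS => (by exact h1 qS : l (S ∪ T) - l T ≤ f S qS)
  linarith
end

section
/- Core allocation from dual prices: let ν^{(1)},…,ν^{(N)} be an optimal dual solution for the grand coalition M, satisfying strong duality l(M) = (1/N)·Σ_ξ ν^{(ξ)}·Σ_{i∈M} y_i^{(ξ)} and the dual feasibility constraints Σ_ξ ν^{(ξ)} ≤ 0 and −ψ⁻ ≤ ν^{(ξ)} ≤ ψ⁺. Define a_i = (1/N)·Σ_ξ ν^{(ξ)}·y_i^{(ξ)} for each i ∈ M. Then the allocation (a_i)_{i∈M} is in the core of the cost game (M, l): Σ_{i∈M} a_i = l(M), and for every coalition S ⊆ M, Σ_{i∈S} a_i ≤ l(S). -/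
/-- Core allocation from optimal dual prices of the grand-coalition
scenario-based newsvendor LP. -/
theorem dual_allocation_in_core
    (m N : ℕ) (hN : 1 ≤ N)
    (y : Fin m → Fin N → ℝ) (P : Fin m → ℝ)
    (hy0 : ∀ i ξ, 0 ≤ y i ξ) (hyP : ∀ i ξ, y i ξ ≤ P i)
    (ψp ψm : ℝ) (hψp : 0 < ψp) (hψm : 0 < ψm)
    (l : Finset (Fin m) → ℝ)
    (hl : ∀ S : Finset (Fin m),
      l S = sInf ((fun q : ℝ => (1 / N : ℝ) * ∑ ξ : Fin N,
          (ψp * max ((∑ i ∈ S, y i ξ) - q) 0 +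
           ψm * max (q - ∑ i ∈ S, y i ξ) 0)) ''
        Set.Icc 0 (∑ i ∈ S, P i)))
    (ν : Fin N → ℝ)
    (hsum : (∑ ξ : Fin N, ν ξ) ≤ 0)
    (hbox : ∀ ξ, -ψm ≤ ν ξ ∧ ν ξ ≤ ψp)
    (hstrong : l Finset.univ =
      (1 / N : ℝ) * ∑ ξ : Fin N, ν ξ * (∑ i : Fin m, y i ξ))
    (a : Fin m → ℝ)
    (ha : ∀ i, a i = (1 / N : ℝ) * ∑ ξ : Fin N, ν ξ * y i ξ) :
    (∑ i : Fin m, a i) = l Finset.univ ∧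
    ∀ S : Finset (Fin m), (∑ i ∈ S, a i) ≤ l S := by
  have key : ∀ S : Finset (Fin m),
      (∑ i ∈ S, a i) = (1 / N : ℝ) * ∑ ξ : Fin N, ν ξ * (∑ i ∈ S, y i ξ) := by
    intro S
    simp only [ha, ← Finset.mul_sum]
    congr 1
    rw [Finset.sum_comm]
    simp [Finset.mul_sum]
  constructor
  · rw [hstrong, ← Finset.sum_coe_sort]
    simpa using key Finset.univ
  · intro S
    rw [hl S, key S]
    have hPpos : (0 : ℝ) ≤ ∑ i ∈ S, P i := by
      apply Finset.sum_nonneg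
      intro i _
      exact le_trans (hy0 i ⟨0, hN⟩) (hyP i ⟨0, hN⟩)
    apply le_csInf (Set.Nonempty.image _ ⟨0, Set.left_mem_Icc.2 hPpos⟩)
    rintro b ⟨q, ⟨hq0, _⟩, rfl⟩
    have hNpos : (0 : ℝ) < 1 / N := by positivity
    apply mul_le_mul_of_nonneg_left _ hNpos.le
    set Y : Fin N → ℝ := fun ξ => ∑ i ∈ S, y i ξ
    have h1 : ∀ ξ, ν ξ * Y ξ ≤
        (ψp * max (Y ξ - q) 0 + ψm * max (q - Y ξ) 0) + ν ξ * q := by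
      intro ξ
      obtain ⟨hlo, hhi⟩ := hbox ξ
      have : ν ξ * Y ξ - ν ξ * q = ν ξ * (Y ξ - q) := by ring
      rcases le_total q (Y ξ) with h | h
      · have : ν ξ * (Y ξ - q) ≤ ψp * max (Y ξ - q) 0 := by
          rw [max_eq_left (by linarith)]
          exact mul_le_mul_of_nonneg_right hhi (by linarith)
        nlinarith [mul_nonneg hψm.le (le_max_right (q - Y ξ) 0)]
      · have : ν ξ * (Y ξ - q) ≤ ψm * max (q - Y ξ) 0 := by
          rw [max_eq_left (by linarith)]
          nlinarith
        nlinarith [mul_nonneg hψp.le (le_max_right (Y ξ - q) 0)]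
    calc ∑ ξ : Fin N, ν ξ * Y ξ
        ≤ ∑ ξ : Fin N, ((ψp * max (Y ξ - q) 0 + ψm * max (q - Y ξ) 0) + ν ξ * q) :=
          Finset.sum_le_sum fun ξ _ => h1 ξ
      _ = (∑ ξ : Fin N, (ψp * max (Y ξ - q) 0 + ψm * max (q - Y ξ) 0))
            + (∑ ξ : Fin N, ν ξ) * q := by
          rw [Finset.sum_add_distrib, Finset.sum_mul]
      _ ≤ ∑ ξ : Fin N, (ψp * max (Y ξ - q) 0 + ψm * max (q - Y ξ) 0) := by
          nlinarith [mul_nonpos_of_nonpos_of_nonneg hsum hq0]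
end
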